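/- Every chain group G ≤ Homeo⁺(ℝ) has trivial center, and its commutator subgroup is perfect: G′′ = G′. -/

import Mathlib

/-- The group of orientation-preserving homeomorphisms of `ℝ`,
realized as order-automorphisms of `ℝ`. -/
abbrev HomeoR := ℝ ≃o ℝ

/-- The support of a homeomorphism of `ℝ`. -/
def supp (f : HomeoR) : Set ℝ := {x : ℝ | f x ≠ x}

/-- The support of a subgroup of `Homeo⁺(ℝ)`. -/
def suppG (G : Subgroup HomeoR) : Set ℝ := ⋃ g ∈ G, supp g

/-- The open interval in `ℝ` with `EReal` endpoints. -/
def eIoo (a b : EReal) : Set ℝ := {t : ℝ | a < (t : EReal) ∧ (t : EReal) < b}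

/-- `a b : Fin n → EReal` are the endpoints of an `n`-chain of intervals. -/
def IsChainOfIntervals {n : ℕ} (a b : Fin n → EReal) : Prop :=
  (∀ i, a i < b i) ∧
  (∀ (i : ℕ) (h : i + 1 < n),
      a ⟨i, by omega⟩ < a ⟨i + 1, h⟩ ∧ a ⟨i + 1, h⟩ < b ⟨i, by omega⟩ ∧
      b ⟨i, by omega⟩ < b ⟨i + 1, h⟩) ∧
  (∀ (i : ℕ) (h : i + 2 < n), b ⟨i, by omega⟩ ≤ a ⟨i + 2, h⟩)

/-- `f : Fin n → HomeoR` is a family of generators of an `n`-prechain group. -/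
def IsPrechainGens {n : ℕ} (f : Fin n → HomeoR) : Prop :=
  2 ≤ n ∧
  ∃ a b : Fin n → EReal, IsChainOfIntervals a b ∧
    (∀ i, supp (f i) = eIoo (a i) (b i)) ∧
    (∀ i, ∀ t : ℝ, t ≤ f i t)

open scoped commutatorElement in
/-- The relators of Thompson's group `F`: `[b⁻¹a, aba⁻¹]` and `[b⁻¹a, a²ba⁻²]`. -/
def thompsonFRels : Set (FreeGroup (Fin 2)) :=
  letI a : FreeGroup (Fin 2) := FreeGroup.of 0
  letI b : FreeGroup (Fin 2) := FreeGroup.of 1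
  {⁅b⁻¹ * a, a * b * a⁻¹⁆, ⁅b⁻¹ * a, a ^ 2 * b * a⁻¹ ^ 2⁆}

/-- Thompson's group `F`. -/
def ThompsonF : Type := PresentedGroup thompsonFRels

instance : Group ThompsonF := by unfold ThompsonF; infer_instance

/-- The relators of the Higman–Thompson group `Fₙ`:
`gᵢ⁻¹ gⱼ gᵢ g_{j+n-1}⁻¹` for `i < j`. -/
def higmanThompsonRels (n : ℕ) : Set (FreeGroup ℕ) :=
  {r | ∃ i j : ℕ, i < j ∧
      r = (FreeGroup.of i)⁻¹ * FreeGroup.of j * FreeGroup.of i *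
        (FreeGroup.of (j + n - 1))⁻¹}

/-- The Higman–Thompson group `Fₙ`. -/
def HigmanThompsonF (n : ℕ) : Type := PresentedGroup (higmanThompsonRels n)

instance (n : ℕ) : Group (HigmanThompsonF n) := by unfold HigmanThompsonF; infer_instance

/-- `f : Fin n → HomeoR` is a family of generators of an `n`-chain group:
a prechain family such that each pair of consecutive generators generates a copy of
Thompson's group `F`. -/
def IsChainGens {n : ℕ} (f : Fin n → HomeoR) : Prop :=
  IsPrechainGens f ∧
  ∀ (i : ℕ) (h : i + 1 < n),
    Nonempty ((Subgroup.closure {f ⟨i, by omega⟩, f ⟨i + 1, h⟩} : Subgroup HomeoR) ≃* ThompsonF)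

/-- A subgroup of `Homeo⁺(ℝ)` is an `n`-chain group if it is generated by an
`n`-family of chain group generators. -/
def IsChainGroup (n : ℕ) (G : Subgroup HomeoR) : Prop :=
  ∃ f : Fin n → HomeoR, IsChainGens f ∧ G = Subgroup.closure (Set.range f)

/-- The orbit of a point under a subgroup of `Homeo⁺(ℝ)`. -/
def orbitG (G : Subgroup HomeoR) (x : ℝ) : Set ℝ := {y : ℝ | ∃ g ∈ G, g x = y}

/-!
A central element `ζ` commutes with every generator `fᵢ`, so it preserves each support
`Jᵢ = (aᵢ, bᵢ)`; in particular it fixes the real endpoint `a₁ ∈ J₀`. All generators other than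
`f₀` are trivial near `a₀`, so near `a₀` the element `ζ` agrees with a power `f₀⁻ᵐ`. Backward
`f₀`-orbits accumulate at `a₀`, so an element commuting with `f₀` and trivial near `a₀` is
trivial on all of `J₀`; applied to `f₀ᵐ ζ` this gives `ζ = f₀⁻ᵐ` on `J₀`, and `ζ a₁ = a₁`
forces `m = 0`. The same accumulation argument carries `ζ = 1` from `Jₖ` to `Jₖ₊₁`.

For `G'' = G'`: generators with non-adjacent supports commute, and adjacent ones generate a copy
of `F`, whose commutator subgroup is perfect; so the generators commute modulo `G''`, whence
`G' ≤ G''`. In `F` itself the two defining relations force `⁅a, b⁆ ∈ F''`.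
-/

open scoped commutatorElement

section DerivedSeries

variable {Γ : Type*} [Group Γ]

theorem commutatorElement_mem_derivedSeries_one (x y : Γ) : ⁅x, y⁆ ∈ derivedSeries Γ 1 :=
  Subgroup.commutator_mem_commutator (Subgroup.mem_top x) (Subgroup.mem_top y)

theorem commutator_le_of_closure_eq_top {S : Set Γ} (hS : Subgroup.closure S = ⊤)
    (N : Subgroup Γ) [N.Normal] (h : ∀ s ∈ S, ∀ t ∈ S, ⁅s, t⁆ ∈ N) : commutator Γ ≤ N := by
  set π := QuotientGroup.mk' N
  have hT : Subgroup.closure (π '' S) = ⊤ := by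
    rw [← MonoidHom.map_closure, hS,
      Subgroup.map_top_of_surjective _ (QuotientGroup.mk'_surjective N)]
  have hcenter : Subgroup.center (Γ ⧸ N) = ⊤ := by
    rw [eq_top_iff, ← hT, Subgroup.closure_le, ← Subgroup.centralizer_univ, ← Subgroup.coe_top,
      ← hT, Subgroup.centralizer_closure]
    rintro _ ⟨s, hs, rfl⟩ _ ⟨t, ht, rfl⟩
    rw [← commutatorElement_eq_one_iff_mul_comm, ← map_commutatorElement,
      QuotientGroup.mk'_apply, QuotientGroup.eq_one_iff]
    exact h t ht s hs
  rw [commutator_def, Subgroup.commutator_le]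
  intro x _ y _
  rw [← QuotientGroup.eq_one_iff, ← QuotientGroup.mk'_apply, map_commutatorElement,
    commutatorElement_eq_one_iff_commute]
  exact Subgroup.mem_center_iff.mp (hcenter ▸ Subgroup.mem_top (π y)) (π x)

theorem derivedSeries_two_eq_one_of_closure_eq_top {S : Set Γ} (hS : Subgroup.closure S = ⊤)
    (h : ∀ s ∈ S, ∀ t ∈ S, ⁅s, t⁆ ∈ derivedSeries Γ 2) :
    derivedSeries Γ 2 = derivedSeries Γ 1 :=
  le_antisymm (derivedSeries_antitone Γ one_le_two) (commutator_le_of_closure_eq_top hS _ h)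

theorem derivedSeries_two_eq_one_of_mulEquiv {P : Type*} [Group P] (e : Γ ≃* P)
    (hP : derivedSeries P 2 = derivedSeries P 1) : derivedSeries Γ 2 = derivedSeries Γ 1 := by
  have he := map_derivedSeries_eq (f := e.symm.toMonoidHom) e.symm.surjective
  rw [← he, hP, he]

theorem commutatorElement_mem_derivedSeries_two {P : Type*} [Group P]
    (hP : derivedSeries P 2 = derivedSeries P 1) (φ : P →* Γ) (p q : P) :
    ⁅φ p, φ q⁆ ∈ derivedSeries Γ 2 := by
  rw [← map_commutatorElement]
  refine map_derivedSeries_le_derivedSeries φ 2 (Subgroup.mem_map_of_mem φ ?_)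
  rw [hP]
  exact commutatorElement_mem_derivedSeries_one p q

/-- With `y = β⁻¹α` and `P = α⁅α, β⁆α⁻¹`, the relations say that `y` commutes with `αβα⁻¹` and
with `P`; conjugating the first of these by `α` exhibits a conjugate of `⁅α, β⁆` as the
commutator `⁅⁅α, β⁻¹⁆, P⁻¹⁆` of two elements of `Γ'`. -/
theorem commutatorElement_mem_derivedSeries_two_of_thompson_rels {α β : Γ}
    (h₁ : ⁅β⁻¹ * α, α * β * α⁻¹⁆ = 1) (h₂ : ⁅β⁻¹ * α, α ^ 2 * β * α⁻¹ ^ 2⁆ = 1) :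
    ⁅α, β⁆ ∈ derivedSeries Γ 2 := by
  rw [commutatorElement_eq_one_iff_commute] at h₁ h₂
  set y := β⁻¹ * α
  set c := ⁅α, β⁆
  set P := α * c * α⁻¹
  have hP : Commute y P := by
    have : P = α ^ 2 * β * α⁻¹ ^ 2 * (α * β * α⁻¹)⁻¹ := by
      simp only [P, c, commutatorElement_def, sq]; group
    exact this ▸ h₂.mul_right h₁.inv_right
  have hW : (α * y) * c * (α * y)⁻¹ * (α * β⁻¹ * c * (α * β⁻¹)⁻¹) = P := calc
    _ = α * (y * (α * β * α⁻¹)) * (β⁻¹ * y⁻¹ * β⁻¹ * (α * β * α⁻¹) * α⁻¹) := by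
      simp only [y, c, commutatorElement_def]; group
    _ = α * ((α * β * α⁻¹) * y) * (β⁻¹ * y⁻¹ * β⁻¹ * (α * β * α⁻¹) * α⁻¹) := by rw [h₁.eq]
    _ = P := by simp only [y, P, c, commutatorElement_def]; group
  have hm : α * β⁻¹ * c * (α * β⁻¹)⁻¹ = ⁅⁅α, β⁻¹⁆, P⁻¹⁆ := calc
    _ = ((α * y) * c * (α * y)⁻¹)⁻¹ * P := eq_inv_mul_of_mul_eq hW
    _ = (⁅α, β⁻¹⁆ * (y * P * y⁻¹) * ⁅α, β⁻¹⁆⁻¹)⁻¹ * P := by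
      simp only [y, P, commutatorElement_def]; group
    _ = ⁅⁅α, β⁻¹⁆, P⁻¹⁆ := by
      rw [hP.eq, mul_inv_cancel_right, commutatorElement_def]; group
  have hk : ⁅α, β⁻¹⁆ ∈ derivedSeries Γ 1 := commutatorElement_mem_derivedSeries_one α β⁻¹
  have hP' : P⁻¹ ∈ derivedSeries Γ 1 := inv_mem ((derivedSeries_normal Γ 1).conj_mem c
    (commutatorElement_mem_derivedSeries_one α β) α)
  have hm' : α * β⁻¹ * c * (α * β⁻¹)⁻¹ ∈ derivedSeries Γ 2 :=
    hm ▸ Subgroup.commutator_mem_commutator hk hP'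
  simpa [mul_assoc] using (derivedSeries_normal Γ 2).conj_mem _ hm' (α * β⁻¹)⁻¹

end DerivedSeries

theorem ThompsonF.derivedSeries_two_eq_one :
    derivedSeries ThompsonF 2 = derivedSeries ThompsonF 1 := by
  change derivedSeries (PresentedGroup thompsonFRels) 2 = derivedSeries _ 1
  set a : PresentedGroup thompsonFRels := .of 0
  set b : PresentedGroup thompsonFRels := .of 1
  have h₁ : ⁅b⁻¹ * a, a * b * a⁻¹⁆ = 1 := by
    simpa [a, b, PresentedGroup.of] using
      PresentedGroup.one_of_mem (rels := thompsonFRels) (Set.mem_insert _ _)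
  have h₂ : ⁅b⁻¹ * a, a ^ 2 * b * a⁻¹ ^ 2⁆ = 1 := by
    simpa [a, b, PresentedGroup.of] using
      PresentedGroup.one_of_mem (rels := thompsonFRels) (Set.mem_insert_of_mem _ rfl)
  have hab := commutatorElement_mem_derivedSeries_two_of_thompson_rels h₁ h₂
  refine derivedSeries_two_eq_one_of_closure_eq_top (PresentedGroup.closure_range_of _) ?_
  rintro _ ⟨i, rfl⟩ _ ⟨j, rfl⟩
  fin_cases i <;> fin_cases j
  · simp
  · exact hab
  · rw [← commutatorElement_inv]; exact inv_mem hab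
  · simp

theorem eIoo_subset_eIoo {a₁ a₂ b₁ b₂ : EReal} (ha : a₁ ≤ a₂) (hb : b₂ ≤ b₁) :
    eIoo a₂ b₂ ⊆ eIoo a₁ b₁ :=
  fun _ ht => ⟨ha.trans_lt ht.1, ht.2.trans_le hb⟩

section Support

variable {f g ψ : HomeoR} {x : ℝ}

theorem notMem_supp_iff : x ∉ supp f ↔ f x = x := not_not

theorem supp_inv (f : HomeoR) : supp f⁻¹ = supp f :=
  congrArg compl (MulAction.fixedBy_inv ℝ f)

theorem supp_mul_subset (f g : HomeoR) : supp (f * g) ⊆ supp f ∪ supp g := by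
  intro x hx
  by_contra h
  simp only [Set.mem_union, not_or, notMem_supp_iff] at h
  exact hx (by rw [RelIso.mul_apply, h.2, h.1])

theorem mem_supp_conj_iff : x ∈ supp (ψ * g * ψ⁻¹) ↔ ψ⁻¹ x ∈ supp g := by
  conv_lhs => rw [← RelIso.apply_inv_self ψ x]
  simp only [supp, Set.mem_ofPred_eq, RelIso.mul_apply, RelIso.inv_apply_self,
    ψ.injective.ne_iff]

theorem apply_mem_supp_iff_of_commute (h : Commute f g) (x : ℝ) :
    g x ∈ supp f ↔ x ∈ supp f := by
  have hfg : f (g x) = g (f x) := congrArg (· x) h.eq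
  simp only [supp, Set.mem_ofPred_eq, hfg, g.injective.ne_iff]

theorem mapsTo_supp_of_commute (h : Commute f g) : Set.MapsTo g (supp f) (supp f) :=
  fun x hx => (apply_mem_supp_iff_of_commute h x).2 hx

theorem commute_of_disjoint_supp (h : Disjoint (supp f) (supp g)) : Commute f g := by
  have key : ∀ {f g : HomeoR}, Disjoint (supp f) (supp g) → ∀ x ∈ supp f,
      f (g x) = g (f x) := by
    intro f g h x hx
    have hfx : f x ∈ supp f := mapsTo_supp_of_commute (Commute.refl f) hx
    rw [notMem_supp_iff.1 (Set.disjoint_left.1 h hx),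
      notMem_supp_iff.1 (Set.disjoint_left.1 h hfx)]
  ext x
  by_cases hf : x ∈ supp f
  · exact key h x hf
  by_cases hg : x ∈ supp g
  · exact (key h.symm x hg).symm
  · simp only [RelIso.mul_apply, notMem_supp_iff.1 hf, notMem_supp_iff.1 hg]

theorem apply_eq_self_of_mem_closure {S : Set HomeoR} (hg : g ∈ Subgroup.closure S)
    (hx : ∀ s ∈ S, s x = x) : g x = x :=
  (Subgroup.closure_le (MulAction.stabilizer HomeoR x)).2 hx hg

end Support

theorem OrderIso.zpow_apply_eq_self_iff {α : Type*} [LinearOrder α] (φ : α ≃o α) {m : ℤ}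
    (hm : m ≠ 0) (x : α) : (φ ^ m) x = x ↔ φ x = x := by
  have hpow : ∀ n : ℕ, 0 < n → ((φ ^ n) x = x ↔ φ x = x) := fun n hn => by
    change φ ^ n • x = x ↔ _
    rw [← smul_iterate_apply]
    simpa using (Function.Commute.id_right (f := ⇑φ)).iterate_pos_eq_iff_map_eq φ.monotone
      strictMono_id hn (x := x)
  obtain ⟨n, rfl | rfl⟩ := m.eq_nat_or_neg
  · rw [zpow_natCast]; exact hpow n (by omega)
  · rw [zpow_neg, zpow_natCast, ← hpow n (by omega)]
    exact (OrderIso.symm_apply_eq (φ ^ n)).trans eq_comm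

section Dynamics

variable {f φ ξ u : HomeoR} {A B : EReal} {x : ℝ}

theorem inv_apply_lt_of_mem_supp (hup : ∀ t, t ≤ φ t) (hx : x ∈ supp φ) : φ⁻¹ x < x := by
  have h := hup (φ⁻¹ x)
  rw [RelIso.apply_inv_self] at h
  refine h.lt_of_ne fun heq => ?_
  rw [← supp_inv] at hx
  exact hx heq

/-- The limit of the decreasing backward orbit would be a fixed point of `φ` in its support. -/
theorem exists_iterate_inv_apply_lt (hsupp : supp φ = eIoo A B) (hup : ∀ t, t ≤ φ t)
    (hx : x ∈ supp φ) {c : ℝ} (hc : A < c) : ∃ k : ℕ, (⇑φ⁻¹)^[k] x < c := by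
  by_contra! h
  have hanti : Antitone fun k => (⇑φ⁻¹)^[k] x :=
    φ⁻¹.monotone.antitone_iterate_of_map_le (inv_apply_lt_of_mem_supp hup hx).le
  have hbdd : BddBelow (Set.range fun k => (⇑φ⁻¹)^[k] x) := ⟨c, Set.forall_mem_range.2 h⟩
  set L := ⨅ k, (⇑φ⁻¹)^[k] x
  have hfix : φ⁻¹ L = L := isFixedPt_of_tendsto_iterate (tendsto_atTop_ciInf hanti hbdd)
    φ⁻¹.continuous.continuousAt
  have hL : L ∈ supp φ := by
    rw [hsupp] at hx ⊢
    exact ⟨hc.trans_le (EReal.coe_le_coe_iff.2 (le_ciInf h)),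
      (EReal.coe_le_coe_iff.2 (ciInf_le hbdd 0)).trans_lt hx.2⟩
  rw [← supp_inv] at hL
  exact hL hfix

theorem disjoint_supp_of_commute (hsupp : supp φ = eIoo A B) (hup : ∀ t, t ≤ φ t)
    (hcomm : Commute φ u) {c : EReal} (hc : A < c) (h : Disjoint (supp u) (eIoo A c)) :
    Disjoint (supp u) (eIoo A B) := by
  rw [Set.disjoint_left] at h ⊢
  intro x hxu hxJ
  obtain ⟨c', hAc', hc'c⟩ := EReal.exists_between_coe_real hc
  rw [← hsupp] at hxJ
  obtain ⟨k, hk⟩ := exists_iterate_inv_apply_lt hsupp hup hxJ hAc'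
  have hφ := (mapsTo_supp_of_commute (Commute.refl φ).inv_right).iterate k hxJ
  rw [hsupp] at hφ
  exact h ((mapsTo_supp_of_commute hcomm.symm.inv_right).iterate k hxu)
    ⟨hφ.1, (EReal.coe_lt_coe_iff.2 hk).trans hc'c⟩

theorem apply_le_of_commute {a : ℝ} (hsupp : supp f = eIoo a B) (haB : (a : EReal) < B)
    (h : Commute f ξ) : ξ a ≤ a := by
  by_contra! hlt
  obtain ⟨s, has, hsB⟩ :=
    EReal.exists_between_coe_real (lt_min (EReal.coe_lt_coe_iff.2 hlt) haB)
  have hs : s ∈ supp f := hsupp ▸ ⟨has, hsB.trans_le (min_le_right _ _)⟩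
  have hξs := mapsTo_supp_of_commute h.inv_right hs
  rw [hsupp] at hξs
  have : ξ a < ξ (ξ⁻¹ s) := ξ.lt_iff_lt.2 (EReal.coe_lt_coe_iff.1 hξs.1)
  rw [RelIso.apply_inv_self] at this
  exact (EReal.coe_lt_coe_iff.1 (hsB.trans_le (min_le_left _ _))).not_gt this

theorem apply_eq_of_commute {a : ℝ} (hsupp : supp f = eIoo a B) (haB : (a : EReal) < B)
    (h : Commute f ξ) : ξ a = a := by
  refine (apply_le_of_commute hsupp haB h).antisymm ?_
  have := ξ.monotone (apply_le_of_commute hsupp haB h.inv_right)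
  rwa [RelIso.apply_inv_self] at this

end Dynamics

section Germ

variable {g ψ : HomeoR} {A : EReal}

def HasTrivialRightGerm (A : EReal) (g : HomeoR) : Prop :=
  ∃ c : ℝ, A < c ∧ Disjoint (supp g) (eIoo A c)

theorem HasTrivialRightGerm.mul {h : HomeoR} (hg : HasTrivialRightGerm A g)
    (hh : HasTrivialRightGerm A h) : HasTrivialRightGerm A (g * h) := by
  obtain ⟨c, hc, hgc⟩ := hg
  obtain ⟨d, hd, hhd⟩ := hh
  refine ⟨min c d, lt_min hc hd, (Set.disjoint_union_left.2 ⟨?_, ?_⟩).mono_left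
    (supp_mul_subset g h)⟩
  · exact hgc.mono_right (eIoo_subset_eIoo le_rfl (EReal.coe_le_coe_iff.2 (min_le_left c d)))
  · exact hhd.mono_right (eIoo_subset_eIoo le_rfl (EReal.coe_le_coe_iff.2 (min_le_right c d)))

theorem HasTrivialRightGerm.inv (hg : HasTrivialRightGerm A g) :
    HasTrivialRightGerm A g⁻¹ := by
  rwa [HasTrivialRightGerm, supp_inv]

theorem lt_apply_of_mem_fixingSubgroup
    (hψ : ψ ∈ fixingSubgroup HomeoR {t : ℝ | (t : EReal) ≤ A}) {t : ℝ} (ht : A < t) :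
    A < ψ t := by
  by_contra! h
  have hfix : ψ (ψ t) = ψ t := (mem_fixingSubgroup_iff HomeoR).1 hψ _ h
  rw [ψ.injective hfix] at h
  exact h.not_gt ht

theorem HasTrivialRightGerm.conj (hψ : ψ ∈ fixingSubgroup HomeoR {t : ℝ | (t : EReal) ≤ A})
    (hg : HasTrivialRightGerm A g) : HasTrivialRightGerm A (ψ * g * ψ⁻¹) := by
  obtain ⟨c, hc, hgc⟩ := hg
  refine ⟨ψ c, lt_apply_of_mem_fixingSubgroup hψ hc, Set.disjoint_left.2 fun t ht htI => ?_⟩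
  rw [mem_supp_conj_iff] at ht
  have hlt : ψ⁻¹ t < ψ⁻¹ (ψ c) := ψ⁻¹.lt_iff_lt.2 (EReal.coe_lt_coe_iff.1 htI.2)
  rw [RelIso.inv_apply_self] at hlt
  exact Set.disjoint_left.1 hgc ht
    ⟨lt_apply_of_mem_fixingSubgroup (inv_mem hψ) htI.1, EReal.coe_lt_coe_iff.2 hlt⟩

theorem exists_zpow_mul_hasTrivialRightGerm {S : Set HomeoR} {φ : HomeoR}
    (hA : ∃ c : ℝ, A < c) (hφ : φ ∈ fixingSubgroup HomeoR {t : ℝ | (t : EReal) ≤ A})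
    (hS : ∀ s ∈ S, s = φ ∨ HasTrivialRightGerm A s) (hg : g ∈ Subgroup.closure S) :
    ∃ m : ℤ, HasTrivialRightGerm A (φ ^ m * g) := by
  have h1 : HasTrivialRightGerm A 1 := by
    obtain ⟨c, hc⟩ := hA
    exact ⟨c, hc, by simp [supp]⟩
  induction hg using Subgroup.closure_induction with
  | mem s hs =>
    obtain rfl | hs := hS s hs
    · exact ⟨-1, by rwa [zpow_neg_one, inv_mul_cancel]⟩
    · exact ⟨0, by rwa [zpow_zero, one_mul]⟩
  | one => exact ⟨0, by rwa [zpow_zero, one_mul]⟩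
  | mul g h _ _ ihg ihh =>
    obtain ⟨m, hm⟩ := ihg
    obtain ⟨m', hm'⟩ := ihh
    refine ⟨m + m', ?_⟩
    have := (hm.conj (zpow_mem hφ m')).mul hm'
    rwa [show φ ^ m' * (φ ^ m * g) * (φ ^ m')⁻¹ * (φ ^ m' * h) = φ ^ (m + m') * (g * h) by
      group] at this
  | inv g _ ihg =>
    obtain ⟨m, hm⟩ := ihg
    refine ⟨-m, ?_⟩
    have := hm.inv.conj (zpow_mem hφ (-m))
    rwa [show φ ^ (-m) * (φ ^ m * g)⁻¹ * (φ ^ (-m))⁻¹ = φ ^ (-m) * g⁻¹ by group] at this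

end Germ

namespace IsChainOfIntervals

variable {n : ℕ} {a b : Fin n → EReal}

theorem monotone_left (h : IsChainOfIntervals a b) : Monotone a := by
  cases n with
  | zero => exact fun i => i.elim0
  | succ m => exact Fin.monotone_iff_le_succ.2 fun i => (h.2.1 i i.succ.isLt).1.le

theorem disjoint_of_add_two_le (h : IsChainOfIntervals a b) {i j : Fin n}
    (hij : i.val + 2 ≤ j.val) : Disjoint (eIoo (a i) (b i)) (eIoo (a j) (b j)) := by
  refine Set.disjoint_left.2 fun t hti htj => ?_
  have hb : b i ≤ a ⟨i.val + 2, by omega⟩ := h.2.2 i (by omega)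
  have ha : a ⟨i.val + 2, by omega⟩ ≤ a j := h.monotone_left (Fin.le_def.2 hij)
  exact (hti.2.trans_le (hb.trans ha)).not_gt htj.1

end IsChainOfIntervals

section Center

variable {n : ℕ} {f : Fin n → HomeoR} {a b : Fin n → EReal} (hn : 2 ≤ n)
  (hab : IsChainOfIntervals a b) (hsupp : ∀ i, supp (f i) = eIoo (a i) (b i))
  (hup : ∀ i, ∀ t, t ≤ f i t) {ζ : HomeoR} (hζ : ζ ∈ Subgroup.closure (Set.range f))
  (hcomm : ∀ i, Commute (f i) ζ)
include hn hab hsupp hup hζ hcomm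

theorem disjoint_supp_first_of_commute :
    Disjoint (supp ζ) (eIoo (a ⟨0, by omega⟩) (b ⟨0, by omega⟩)) := by
  set i₀ : Fin n := ⟨0, by omega⟩
  set i₁ : Fin n := ⟨1, by omega⟩
  set φ := f i₀
  obtain ⟨h₀₁, h₁₀, -⟩ := hab.2.1 0 (by omega)
  change a i₀ < a i₁ at h₀₁
  change a i₁ < b i₀ at h₁₀
  obtain ⟨r, hr⟩ : ∃ r : ℝ, a i₁ = r :=
    ⟨(a i₁).toReal, (EReal.coe_toReal h₁₀.ne_top h₀₁.ne_bot).symm⟩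
  rw [hr] at h₀₁ h₁₀
  have hφ : φ ∈ fixingSubgroup HomeoR {t : ℝ | (t : EReal) ≤ a i₀} :=
    (mem_fixingSubgroup_iff HomeoR).2 fun t ht => notMem_supp_iff.1 fun h =>
      ((hsupp i₀ ▸ h).1.trans_le ht).false
  have hgen : ∀ s ∈ Set.range f, s = φ ∨ HasTrivialRightGerm (a i₀) s := by
    rintro _ ⟨i, rfl⟩
    by_cases hi : i = i₀
    · exact .inl (by rw [hi])
    refine .inr ⟨r, h₀₁, Set.disjoint_left.2 fun t hti ht₀ => ?_⟩
    have hai : (r : EReal) ≤ a i := hr ▸ hab.monotone_left (Fin.le_def.2 (by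
      have := Fin.val_ne_of_ne hi; simp only [i₀, i₁] at this ⊢; omega))
    exact (ht₀.2.trans_le hai).not_gt (hsupp i ▸ hti).1
  obtain ⟨m, c, hc, hmc⟩ := exists_zpow_mul_hasTrivialRightGerm ⟨r, h₀₁⟩ hφ hgen hζ
  have hu := disjoint_supp_of_commute (hsupp i₀) (hup i₀)
    (((Commute.refl φ).zpow_right m).mul_right (hcomm i₀)) hc hmc
  have hζr : ζ r = r := apply_eq_of_commute (hr ▸ hsupp i₁) (hr ▸ hab.1 i₁) (hcomm i₁)
  have hr₀ : r ∈ eIoo (a i₀) (b i₀) := ⟨h₀₁, h₁₀⟩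
  obtain rfl : m = 0 := by
    by_contra hm
    have hfix : (φ ^ m * ζ) r = r := notMem_supp_iff.1 (Set.disjoint_right.1 hu hr₀)
    rw [RelIso.mul_apply, hζr, OrderIso.zpow_apply_eq_self_iff φ hm] at hfix
    exact (hsupp i₀ ▸ hr₀ : r ∈ supp φ) hfix
  rwa [zpow_zero, one_mul] at hu

theorem eq_one_of_commute_of_chain : ζ = 1 := by
  have hJ : ∀ i, Disjoint (supp ζ) (eIoo (a i) (b i)) := by
    rintro ⟨k, hk⟩
    induction k with
    | zero => exact disjoint_supp_first_of_commute hn hab hsupp hup hζ hcomm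
    | succ k ih =>
      obtain ⟨h₁, h₂, -⟩ := hab.2.1 k hk
      exact disjoint_supp_of_commute (hsupp _) (hup _) (hcomm _) h₂
        ((ih (by omega)).mono_right (eIoo_subset_eIoo h₁.le le_rfl))
  ext x
  by_contra hx
  refine hx (apply_eq_self_of_mem_closure hζ ?_)
  rintro _ ⟨i, rfl⟩
  exact notMem_supp_iff.1 fun hxi => Set.disjoint_left.1 (hJ i) hx (hsupp i ▸ hxi)

end Center

theorem IsPrechainGens.center_closure_eq_bot {n : ℕ} {f : Fin n → HomeoR}
    (hf : IsPrechainGens f) : Subgroup.center (Subgroup.closure (Set.range f)) = ⊥ := by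
  obtain ⟨hn, a, b, hab, hsupp, hup⟩ := hf
  refine (Subgroup.eq_bot_iff_forall _).2 fun z hz => Subtype.ext ?_
  refine eq_one_of_commute_of_chain hn hab hsupp hup z.2 fun i => ?_
  exact congrArg Subtype.val
    (Subgroup.mem_center_iff.1 hz ⟨f i, Subgroup.subset_closure ⟨i, rfl⟩⟩)

namespace IsChainGens

variable {n : ℕ} {f : Fin n → HomeoR}

theorem commutatorElement_mem_derivedSeries_two (hf : IsChainGens f) {i j : Fin n} (hij : i ≤ j)
    {s t : Subgroup.closure (Set.range f)} (hs : ↑s = f i) (ht : ↑t = f j) :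
    ⁅s, t⁆ ∈ derivedSeries (Subgroup.closure (Set.range f)) 2 := by
  obtain ⟨⟨-, a, b, hab, hsupp, -⟩, hF⟩ := hf
  rw [Fin.le_def] at hij
  obtain hij | hij | hij : j.val = i.val ∨ j.val = i.val + 1 ∨ i.val + 2 ≤ j.val := by omega
  · obtain rfl : s = t := Subtype.ext (by rw [hs, ht, Fin.ext hij])
    simp
  · obtain ⟨e⟩ := hF i (hij ▸ j.isLt)
    have hP := derivedSeries_two_eq_one_of_mulEquiv e ThompsonF.derivedSeries_two_eq_one
    have hle : Subgroup.closure {f ⟨i, by omega⟩, f ⟨i + 1, hij ▸ j.isLt⟩} ≤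
        Subgroup.closure (Set.range f) :=
      Subgroup.closure_mono (by rintro _ (rfl | rfl) <;> exact ⟨_, rfl⟩)
    convert _root_.commutatorElement_mem_derivedSeries_two hP (Subgroup.inclusion hle)
      ⟨_, Subgroup.subset_closure (.inl rfl)⟩ ⟨_, Subgroup.subset_closure (.inr rfl)⟩ <;>
      ext <;> simp [hs, ht, ← hij]
  · have hfij : Commute (f i) (f j) := commute_of_disjoint_supp (by
      rw [hsupp, hsupp]; exact hab.disjoint_of_add_two_le hij)
    have hst : Commute s t := Subtype.ext (by simp [hs, ht, hfij.eq])
    rw [commutatorElement_eq_one_iff_commute.2 hst]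
    exact one_mem _

theorem derivedSeries_two_eq_one (hf : IsChainGens f) :
    derivedSeries (Subgroup.closure (Set.range f)) 2 =
      derivedSeries (Subgroup.closure (Set.range f)) 1 := by
  refine derivedSeries_two_eq_one_of_closure_eq_top Subgroup.closure_closure_coe_preimage ?_
  rintro s ⟨i, hi⟩ t ⟨j, hj⟩
  rcases le_total i j with hij | hij
  · exact hf.commutatorElement_mem_derivedSeries_two hij hi.symm hj.symm
  · rw [← commutatorElement_inv]
    exact inv_mem (hf.commutatorElement_mem_derivedSeries_two hij hj.symm hi.symm)

end IsChainGens

/-- Every chain group `G` has trivial center, and `G'' = G'`. -/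
theorem stmt10 (G : Subgroup HomeoR) (hG : ∃ n : ℕ, IsChainGroup n G) :
    Subgroup.center ↥G = ⊥ ∧
      Subgroup.map (commutator ↥G).subtype (commutator ↥(commutator ↥G)) =
        commutator ↥G := by
  obtain ⟨n, f, hf, rfl⟩ := hG
  refine ⟨hf.1.center_closure_eq_bot, ?_⟩
  rw [Subgroup.map_subtype_commutator]
  exact hf.derivedSeries_two_eq_one
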